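/- arXiv:1410.5923 — 3 statements merged into one kernel-verified Lean document; each statement's English description precedes it below -/
import Mathlib

section
/- The sign factor σ satisfies the cocycle-type identity: for finite subsets I, J, K of ℕ, (-1)^{σ(I,J)} (-1)^{σ(I Δ J, K)} = (-1)^{σ(J,K)} (-1)^{σ(I, J Δ K)}, expressing associativity of the product γ_I γ_J = (-1)^{σ(I,J)} γ_{I Δ J}. -/
/-! σ(I, J) counts the pairs (i, j) ∈ I × J with j < i, so modulo 2 it is additive under
symmetric difference in each argument. Both exponents in the cocycle identity are therefore
congruent to σ(I, J) + σ(I, K) + σ(J, K) modulo 2. -/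

/-- `σ(I,J) = Σ_{j ∈ J} #{i ∈ I : i > j}`. -/
def sigmaCount (I J : Finset ℕ) : ℕ :=
  ∑ j ∈ J, (I.filter (fun i => j < i)).card

open Finset

theorem Finset.sum_symmDiff_add_two_nsmul_sum_inter {α M : Type*} [DecidableEq α]
    [AddCommMonoid M] (s t : Finset α) (f : α → M) :
    ∑ x ∈ symmDiff s t, f x + 2 • ∑ x ∈ s ∩ t, f x = ∑ x ∈ s, f x + ∑ x ∈ t, f x := by
  rw [symmDiff_def, sup_eq_union, sum_union disjoint_sdiff_sdiff, two_nsmul,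
    ← sum_inter_add_sum_sdiff s t f, ← sum_inter_add_sum_sdiff t s f, inter_comm t s]
  abel

theorem Finset.sum_symmDiff_of_charTwo {α R : Type*} [DecidableEq α] [Ring R] [CharP R 2]
    (s t : Finset α) (f : α → R) :
    ∑ x ∈ symmDiff s t, f x = ∑ x ∈ s, f x + ∑ x ∈ t, f x := by
  rw [← sum_symmDiff_add_two_nsmul_sum_inter, CharTwo.two_nsmul, add_zero]

theorem neg_one_pow_eq_of_natCast_zmod_two_eq {R : Type*} [Ring R] {m n : ℕ}
    (h : (m : ZMod 2) = n) : (-1 : R) ^ m = (-1) ^ n := by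
  rw [neg_one_pow_eq_pow_mod_two, (ZMod.natCast_eq_natCast_iff' m n 2).1 h,
    ← neg_one_pow_eq_pow_mod_two]

theorem sigmaCount_cast {R : Type*} [Semiring R] (I J : Finset ℕ) :
    (sigmaCount I J : R) = ∑ j ∈ J, ∑ i ∈ I, if j < i then 1 else 0 := by
  simp only [sigmaCount, card_filter]
  push_cast
  rfl

section CharTwo

variable {R : Type*} [Ring R] [CharP R 2] (I J K : Finset ℕ)

theorem sigmaCount_symmDiff_left_cast :
    (sigmaCount (symmDiff I J) K : R) = sigmaCount I K + sigmaCount J K := by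
  simp only [sigmaCount_cast, sum_symmDiff_of_charTwo, sum_add_distrib]

theorem sigmaCount_symmDiff_right_cast :
    (sigmaCount I (symmDiff J K) : R) = sigmaCount I J + sigmaCount I K := by
  simp only [sigmaCount_cast, sum_symmDiff_of_charTwo]

end CharTwo

/-- Cocycle identity for the sign factor, expressing associativity of
`γ_I γ_J = (-1)^{σ(I,J)} γ_{I Δ J}`. -/
theorem sigmaCount_cocycle (I J K : Finset ℕ) :
    (-1 : ℤ) ^ (sigmaCount I J) * (-1 : ℤ) ^ (sigmaCount (symmDiff I J) K) =
      (-1 : ℤ) ^ (sigmaCount J K) * (-1 : ℤ) ^ (sigmaCount I (symmDiff J K)) := by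
  rw [← pow_add, ← pow_add]
  apply neg_one_pow_eq_of_natCast_zmod_two_eq
  push_cast
  rw [sigmaCount_symmDiff_left_cast, sigmaCount_symmDiff_right_cast]
  ring
end

section
/- Let 𝔥 be a Lie algebra over a field K of characteristic zero and φ : 𝔥 → K a linear map satisfying φ([x,y]) = 0 for all x, y ∈ 𝔥. Then the ternary bracket [x,y,z] = φ(x)[y,z] + φ(y)[z,x] + φ(z)[x,y] is trilinear, alternating, and satisfies the 3-Lie Filippov identity: [u,v,[x,y,z]] = [[u,v,x],y,z] + [x,[u,v,y],z] + [x,y,[u,v,z]]. -/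
/-- A trace-like form on a Lie algebra induces a 3-Lie algebra:
the bracket `[x,y,z] = φ(x)[y,z] + φ(y)[z,x] + φ(z)[x,y]` is trilinear,
alternating, and satisfies the Filippov identity. -/
theorem induced_three_lie {K 𝔥 : Type*} [Field K] [CharZero K]
    [LieRing 𝔥] [LieAlgebra K 𝔥]
    (φ : 𝔥 →ₗ[K] K) (hφ : ∀ x y : 𝔥, φ ⁅x, y⁆ = 0)
    (T : 𝔥 → 𝔥 → 𝔥 → 𝔥)
    (hT : ∀ x y z : 𝔥, T x y z = φ x • ⁅y, z⁆ + φ y • ⁅z, x⁆ + φ z • ⁅x, y⁆) :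
    (∀ (a : K) (x x' y z : 𝔥), T (a • x + x') y z = a • T x y z + T x' y z) ∧
    (∀ (a : K) (x y y' z : 𝔥), T x (a • y + y') z = a • T x y z + T x y' z) ∧
    (∀ (a : K) (x y z z' : 𝔥), T x y (a • z + z') = a • T x y z + T x y z') ∧
    (∀ x z : 𝔥, T x x z = 0) ∧
    (∀ x y : 𝔥, T x y y = 0) ∧
    (∀ u v x y z : 𝔥,
      T u v (T x y z) = T (T u v x) y z + T x (T u v y) z + T x y (T u v z)) := by
  have sk : ∀ a b : 𝔥, ⁅b, a⁆ = -⁅a, b⁆ := fun a b => by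
    rw [← lie_skew]
  have J : ∀ a b c : 𝔥, ⁅a, ⁅b, c⁆⁆ = ⁅b, ⁅a, c⁆⁆ - ⁅c, ⁅a, b⁆⁆ := fun a b c => by
    rw [leibniz_lie a b c, sk ⁅a,b⁆ c]; abel
  refine ⟨?_, ?_, ?_, ?_, ?_, ?_⟩
  · intro a x x' y z
    simp only [hT, map_add, map_smul, smul_eq_mul, add_lie, lie_add, lie_smul, smul_lie]
    module
  · intro a x y y' z
    simp only [hT, map_add, map_smul, smul_eq_mul, add_lie, lie_add, lie_smul, smul_lie]
    module
  · intro a x y z z'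
    simp only [hT, map_add, map_smul, smul_eq_mul, add_lie, lie_add, lie_smul, smul_lie]
    module
  · intro x z
    simp only [hT, lie_self, smul_zero, sk x z, smul_neg]
    module
  · intro x y
    simp only [hT, lie_self, smul_zero, sk x y, smul_neg]
    module
  · intro u v x y z
    simp only [hT, map_add, map_smul, hφ, smul_eq_mul, mul_zero, zero_smul, add_zero,
      zero_add, add_lie, lie_add, lie_smul, smul_lie, smul_add, smul_smul]
    simp only [lie_lie, sk u x, sk u y, sk u z, sk x z, lie_neg, neg_lie, neg_neg, smul_neg]
    linear_combination (norm := module) (φ v*φ z) • (J u x y) + (φ v*φ x) • (J u y z)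
      - (φ v*φ y) • (J u x z) - (φ x*φ y) • (J u v z) - (φ z*φ x) • (J u v y)
      - (φ y*φ z) • (J u v x)
end

section
/- Let 𝔤 be a super Lie algebra over a field K of characteristic zero and τ : 𝔤 → K an even linear map with τ([x,y]) = 0 for all x,y and τ = 0 on odd elements. Define [x,y,z] = τ(x)[y,z] - (-1)^{|x||y|}τ(y)[x,z] + (-1)^{|z|(|x|+|y|)}τ(z)[x,y]. Then the super Filippov identity holds: [u,v,[x,y,z]] = [[u,v,x],y,z] + (-1)^{|x|(|u|+|v|)}[x,[u,v,y],z] + (-1)^{(|x|+|y|)(|u|+|v|)}[x,y,[u,v,z]] for all homogeneous u,v,x,y,z. -/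
set_option maxHeartbeats 2000000 in
/-- The ternary bracket induced on a super Lie algebra by an even supertrace-like form
`τ` (vanishing on brackets and on odd elements) satisfies the super Filippov identity:
this is the induced super 3-Lie algebra. -/
theorem induced_super_filippov {K 𝔤 : Type*} [Field K] [CharZero K]
    [AddCommGroup 𝔤] [Module K 𝔤]
    (𝒢 : ZMod 2 → Submodule K 𝔤)
    (b : 𝔤 →ₗ[K] 𝔤 →ₗ[K] 𝔤)
    (hgrade : ∀ (i j : ZMod 2) (x y : 𝔤), x ∈ 𝒢 i → y ∈ 𝒢 j → b x y ∈ 𝒢 (i + j))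
    (hanti : ∀ (i j : ZMod 2) (x y : 𝔤), x ∈ 𝒢 i → y ∈ 𝒢 j →
      b x y = -((-1 : K) ^ (i.val * j.val)) • b y x)
    (hjac : ∀ (i j : ZMod 2) (x y z : 𝔤), x ∈ 𝒢 i → y ∈ 𝒢 j →
      b x (b y z) = b (b x y) z + ((-1 : K) ^ (i.val * j.val)) • b y (b x z))
    (τ : 𝔤 →ₗ[K] K) (hτb : ∀ x y : 𝔤, τ (b x y) = 0) (hτodd : ∀ x ∈ 𝒢 1, τ x = 0)
    (T : ZMod 2 → ZMod 2 → ZMod 2 → 𝔤 → 𝔤 → 𝔤 → 𝔤)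
    (hT : ∀ (i j k : ZMod 2) (x y z : 𝔤), T i j k x y z =
      τ x • b y z - ((-1 : K) ^ (i.val * j.val) * τ y) • b x z +
        ((-1 : K) ^ (k.val * (i.val + j.val)) * τ z) • b x y)
    (p q i j k : ZMod 2) (u v x y z : 𝔤)
    (hu : u ∈ 𝒢 p) (hv : v ∈ 𝒢 q) (hx : x ∈ 𝒢 i) (hy : y ∈ 𝒢 j) (hz : z ∈ 𝒢 k) :
    T p q (i + j + k) u v (T i j k x y z) =
      T (p + q + i) j k (T p q i u v x) y z +
      ((-1 : K) ^ (i.val * (p.val + q.val))) • T i (p + q + j) k x (T p q j u v y) z +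
      ((-1 : K) ^ ((i.val + j.val) * (p.val + q.val))) •
        T i j (p + q + k) x y (T p q k u v z) := by
  have hc : ∀ m : ZMod 2, m = 0 ∨ m = 1 := by decide
  have e1 : (1 : ZMod 2) + 1 = 0 := by decide
  simp only [hT, map_sub, map_add, map_smul, LinearMap.sub_apply, LinearMap.add_apply,
    LinearMap.smul_apply, hτb, smul_eq_mul, mul_zero, zero_smul, sub_zero, add_zero,
    smul_sub, smul_add, smul_smul]
  rw [hjac q j v y z hv hy, hjac q i v x z hv hx, hjac q i v x y hv hx,
    hjac p j u y z hu hy, hjac p i u x z hu hx, hjac p i u x y hu hx,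
    hanti (p+q) j (b u v) y (hgrade p q u v hu hv) hy]
  clear hT hjac hanti hgrade hτb
  rcases hc p with rfl | rfl <;> rcases hc q with rfl | rfl <;>
    rcases hc i with rfl | rfl <;> rcases hc j with rfl | rfl <;>
    rcases hc k with rfl | rfl <;>
    (simp_all only [hτodd, e1, zero_add, add_zero, ZMod.val_zero, ZMod.val_one,
      mul_zero, zero_mul, mul_one, one_mul, pow_zero, pow_one, zero_smul,
      smul_zero, sub_zero, zero_sub, neg_neg, neg_smul, one_smul];
     try module)
end
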